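/- In the setting of A = O·1 ⊕ μ·X over a Dedekind domain O with μ² = (z), X² = z⁻¹ā X + z⁻¹b̄, with ker(m) = X_μ ⊕ O·X̂ as above: if b̄ is a unit of O, then ker(m) is a free A-module of rank one generated by X̂, where A acts on A ⊗_O A via the left tensor factor. -/

import Mathlib

/-!
In the coordinates `1⊗1, 1⊗X, X⊗1, X⊗X` one has `X̂ = (-b̄, 0, -ā, z)`, and the identities
`ℓ_{uX}(X̂) = -X_{b̄u} + (uā/z) X̂` combine into
`ℓ_x(X̂) = (x₁ + x₂ā/z) • X̂ - X_{b̄x₂}` for `x = x₁ + x₂X`.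
For `x ∈ A` we have `x₂ā ∈ μ² = (z)`, so the coefficient lies in `O`, and `b̄x₂ ∈ μ`:
hence `ℓ_x(X̂) ∈ A ⊗ A`, and it lies in `ker m` since both `X̂` and `X_v` do.
The coordinates `1⊗X` and `X⊗X` of `ℓ_x(X̂)` are `b̄x₂` and `zx₁ + āx₂`, which gives injectivity
and, conversely, recovers `x` from any `w ∈ ker m`. Integrality of that `x` uses that the
`1⊗X`-coordinate of an element of `A ⊗ A` lies in `μ`, its `X⊗X`-coordinate in `μ² = (z)`,
and that `b̄` is a unit.
-/

/-- The element of `K⁴` (coordinates `1⊗1, 1⊗X, X⊗1, X⊗X`) representing `p ⊗ q`. -/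
def tens {K : Type*} [Field K] (p q : K × K) : Fin 4 → K :=
  ![p.1 * q.1, p.1 * q.2, p.2 * q.1, p.2 * q.2]

/-- The multiplication map `m : K² ⊗ K² → K²` for `X² = aX + b`, in coordinates. -/
noncomputable def mulMap {K : Type*} [Field K] (a b : K) : (Fin 4 → K) →ₗ[K] K × K :=
  LinearMap.prod
    ((LinearMap.proj (0 : Fin 4) : (Fin 4 → K) →ₗ[K] K) +
      b • (LinearMap.proj (3 : Fin 4) : (Fin 4 → K) →ₗ[K] K))
    ((LinearMap.proj (1 : Fin 4) : (Fin 4 → K) →ₗ[K] K) +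
      (LinearMap.proj (2 : Fin 4) : (Fin 4 → K) →ₗ[K] K) +
      a • (LinearMap.proj (3 : Fin 4) : (Fin 4 → K) →ₗ[K] K))

/-- `X_v = vX ⊗ 1 − 1 ⊗ vX` in coordinates. -/
def Xel {K : Type*} [Field K] (v : K) : Fin 4 → K := ![0, -v, v, 0]

/-- Left multiplication `ℓ_x` by `x = x₁·1 + x₂·X` on the first tensor factor,
in the coordinates `1⊗1, 1⊗X, X⊗1, X⊗X`, for `X² = aX + b`. -/
def ellOp {K : Type*} [Field K] (a b : K) (x : K × K) (c : Fin 4 → K) : Fin 4 → K :=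
  ![x.1 * c 0 + b * (x.2 * c 2), x.1 * c 1 + b * (x.2 * c 3),
    x.2 * c 0 + x.1 * c 2 + a * (x.2 * c 2), x.2 * c 1 + x.1 * c 3 + a * (x.2 * c 3)]

def xhat {K : Type*} [Field K] (α β ζ : K) : Fin 4 → K := ![-β, 0, -α, ζ]

section Coordinates

variable {K : Type*} [Field K]

theorem ellOp_xhat (α β ζ : K) (hζ : ζ ≠ 0) (x : K × K) :
    ellOp (α / ζ) (β / ζ) x (xhat α β ζ) = (x.1 + x.2 * α / ζ) • xhat α β ζ - Xel (β * x.2) := by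
  funext i
  fin_cases i <;>
    simp only [ellOp, xhat, Xel, Pi.sub_apply, Pi.smul_apply, smul_eq_mul, Fin.zero_eta,
      Fin.mk_one, Fin.reduceFinMk, Matrix.cons_val] <;>
    field_simp <;> ring

theorem mulMap_apply (a b : K) (c : Fin 4 → K) :
    mulMap a b c = (c 0 + b * c 3, c 1 + c 2 + a * c 3) := by
  simp [mulMap]

theorem mulMap_Xel (a b v : K) : mulMap a b (Xel v) = 0 := by
  simp [mulMap_apply, Xel]

theorem mulMap_xhat (α β ζ : K) (hζ : ζ ≠ 0) : mulMap (α / ζ) (β / ζ) (xhat α β ζ) = 0 := by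
  simp [mulMap_apply, xhat, div_mul_cancel₀ _ hζ]

theorem mulMap_ellOp_xhat (α β ζ : K) (hζ : ζ ≠ 0) (x : K × K) :
    mulMap (α / ζ) (β / ζ) (ellOp (α / ζ) (β / ζ) x (xhat α β ζ)) = 0 := by
  rw [ellOp_xhat α β ζ hζ, map_sub, map_smul, mulMap_xhat α β ζ hζ, mulMap_Xel, smul_zero,
    sub_zero]

theorem ellOp_xhat_injective (α β ζ : K) (hζ : ζ ≠ 0) (hβ : β ≠ 0) :
    Function.Injective fun x => ellOp (α / ζ) (β / ζ) x (xhat α β ζ) := by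
  intro x y hxy
  have h₂ : x.2 = y.2 := by simpa [ellOp, xhat, hβ, hζ] using congrFun hxy 1
  have h₁ : x.1 = y.1 := by simpa [ellOp, xhat, h₂, hζ] using congrFun hxy 3
  exact Prod.ext h₁ h₂

theorem ellOp_xhat_eq_of_mulMap_eq_zero (α β ζ : K) (hζ : ζ ≠ 0) (hβ : β ≠ 0) {w : Fin 4 → K}
    (hw : mulMap (α / ζ) (β / ζ) w = 0) :
    ellOp (α / ζ) (β / ζ) ((w 3 - α * (w 1 / β)) / ζ, w 1 / β) (xhat α β ζ) = w := by
  obtain ⟨h₀, h₂⟩ := Prod.mk_eq_zero.mp ((mulMap_apply _ _ w).symm.trans hw)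
  field_simp at h₀ h₂
  funext i
  fin_cases i <;>
    simp only [ellOp, xhat, Fin.zero_eta, Fin.mk_one, Fin.reduceFinMk, Matrix.cons_val] <;>
    field_simp
  · linear_combination -h₀
  · ring
  · linear_combination -β * h₂
  · ring

end Coordinates

theorem sum_tens_sub_tens_eq_xhat {O K : Type*} [CommRing O] [Field K] [Algebra O K] {k : ℕ}
    {u u' : Fin k → O} {z : O} (hsum : ∑ j, u j * u' j = z) (abar bbar : O) :
    (∑ j, tens ((0 : K), algebraMap O K (u j)) ((0 : K), algebraMap O K (u' j))) -
        (tens ((0 : K), algebraMap O K abar) ((1 : K), (0 : K)) +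
          tens (algebraMap O K bbar, (0 : K)) ((1 : K), (0 : K))) =
      xhat (algebraMap O K abar) (algebraMap O K bbar) (algebraMap O K z) := by
  funext i
  fin_cases i <;> simp [tens, xhat, Finset.sum_apply, ← hsum]

theorem Ideal.exists_mul_eq_mul_of_mul_self_eq_span {R : Type*} [CommRing R] {I : Ideal R} {z : R}
    (hI : I * I = Ideal.span {z}) {m n : R} (hm : m ∈ I) (hn : n ∈ I) : ∃ s, s * z = m * n :=
  Ideal.mem_span_singleton'.mp (hI ▸ Ideal.mul_mem_mul hm hn)

section Lattice

variable {O : Type*} (K : Type*) [CommRing O] [Field K] [Algebra O K] (μ : Ideal O)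

def latticeA : Submodule O (K × K) :=
  (LinearMap.range (Algebra.linearMap O K)).prod (Submodule.map (Algebra.linearMap O K) μ)

def latticeAA : Submodule O (Fin 4 → K) :=
  Submodule.span O {w | ∃ p ∈ latticeA K μ, ∃ q ∈ latticeA K μ, w = tens p q}

variable {K μ}

theorem tens_mem_latticeAA {p q : K × K} (hp : p ∈ latticeA K μ) (hq : q ∈ latticeA K μ) :
    tens p q ∈ latticeAA K μ :=
  Submodule.subset_span ⟨p, hp, q, hq, rfl⟩

theorem one_mem_latticeA : ((1 : K), (0 : K)) ∈ latticeA K μ :=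
  ⟨⟨1, map_one (algebraMap O K)⟩, zero_mem _⟩

theorem algebraMap_mk_zero_mem_latticeA (o : O) : (algebraMap O K o, (0 : K)) ∈ latticeA K μ :=
  ⟨⟨o, rfl⟩, zero_mem _⟩

theorem zero_mk_algebraMap_mem_latticeA {m : O} (hm : m ∈ μ) :
    ((0 : K), algebraMap O K m) ∈ latticeA K μ :=
  ⟨zero_mem _, Submodule.mem_map_of_mem hm⟩

theorem Xel_mem_latticeAA {m : O} (hm : m ∈ μ) : Xel (algebraMap O K m) ∈ latticeAA K μ := by
  have h : Xel (algebraMap O K m) =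
      tens (0, algebraMap O K m) (1, 0) - tens (1, 0) (0, algebraMap O K m) := by
    funext i
    fin_cases i <;> simp [Xel, tens]
  rw [h]
  exact sub_mem (tens_mem_latticeAA (zero_mk_algebraMap_mem_latticeA hm) one_mem_latticeA)
    (tens_mem_latticeAA one_mem_latticeA (zero_mk_algebraMap_mem_latticeA hm))

theorem latticeAA_le :
    latticeAA K μ ≤
      (Submodule.map (Algebra.linearMap O K) μ).comap (LinearMap.proj (R := O) 1) ⊓
        (Submodule.map (Algebra.linearMap O K) (μ * μ)).comap (LinearMap.proj (R := O) 3) := by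
  refine Submodule.span_le.mpr ?_
  rintro _ ⟨⟨_, _⟩, ⟨⟨o, rfl⟩, m, hm, rfl⟩, ⟨_, _⟩, ⟨⟨o', rfl⟩, m', hm', rfl⟩, rfl⟩
  refine ⟨⟨o * m', μ.mul_mem_left o hm', ?_⟩, ⟨m * m', Ideal.mul_mem_mul hm hm', ?_⟩⟩ <;>
    simp [tens]

variable {z abar bbar : O}

theorem xhat_mem_latticeAA (habar : abar ∈ μ) {k : ℕ} {u u' : Fin k → O}
    (hu : ∀ j, u j ∈ μ) (hu' : ∀ j, u' j ∈ μ) (hsum : ∑ j, u j * u' j = z) :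
    xhat (algebraMap O K abar) (algebraMap O K bbar) (algebraMap O K z) ∈ latticeAA K μ := by
  rw [← sum_tens_sub_tens_eq_xhat hsum]
  refine sub_mem (Submodule.sum_mem _ fun j _ => ?_) (add_mem ?_ ?_)
  · exact tens_mem_latticeAA (zero_mk_algebraMap_mem_latticeA (hu j))
      (zero_mk_algebraMap_mem_latticeA (hu' j))
  · exact tens_mem_latticeAA (zero_mk_algebraMap_mem_latticeA habar) one_mem_latticeA
  · exact tens_mem_latticeAA (algebraMap_mk_zero_mem_latticeA bbar) one_mem_latticeA

theorem ellOp_xhat_mem_latticeAA (hsq : μ * μ = Ideal.span {z}) (habar : abar ∈ μ)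
    (hz : algebraMap O K z ≠ 0)
    (hX : xhat (algebraMap O K abar) (algebraMap O K bbar) (algebraMap O K z) ∈ latticeAA K μ)
    {x : K × K} (hx : x ∈ latticeA K μ) :
    ellOp (algebraMap O K abar / algebraMap O K z) (algebraMap O K bbar / algebraMap O K z) x
      (xhat (algebraMap O K abar) (algebraMap O K bbar) (algebraMap O K z)) ∈ latticeAA K μ := by
  obtain ⟨⟨o, ho⟩, m, hm, hm'⟩ := hx
  obtain ⟨s, hs⟩ := Ideal.exists_mul_eq_mul_of_mul_self_eq_span hsq hm habar
  have hcoef : x.1 + x.2 * algebraMap O K abar / algebraMap O K z = algebraMap O K (o + s) := by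
    rw [← ho, ← hm', Algebra.linearMap_apply, Algebra.linearMap_apply, ← map_mul, ← hs, map_mul,
      mul_div_cancel_right₀ _ hz, map_add]
  rw [ellOp_xhat _ _ _ hz, hcoef, ← hm', Algebra.linearMap_apply, ← map_mul, algebraMap_smul]
  exact sub_mem (Submodule.smul_mem _ _ hX) (Xel_mem_latticeAA (μ.mul_mem_left bbar hm))

theorem exists_ellOp_xhat_eq (hsq : μ * μ = Ideal.span {z}) (habar : abar ∈ μ)
    (hbbar : IsUnit bbar) (hz : algebraMap O K z ≠ 0) {w : Fin 4 → K} (hwA : w ∈ latticeAA K μ)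
    (hw : mulMap (algebraMap O K abar / algebraMap O K z)
      (algebraMap O K bbar / algebraMap O K z) w = 0) :
    ∃ x ∈ latticeA K μ, ellOp (algebraMap O K abar / algebraMap O K z)
      (algebraMap O K bbar / algebraMap O K z) x
      (xhat (algebraMap O K abar) (algebraMap O K bbar) (algebraMap O K z)) = w := by
  obtain ⟨⟨m₁, hm₁, hw₁⟩, c, hc, hw₃⟩ := latticeAA_le hwA
  obtain ⟨t, rfl⟩ := Ideal.mem_span_singleton'.mp (hsq ▸ hc)
  obtain ⟨v, rfl⟩ := hbbar
  have hm : ↑v⁻¹ * m₁ ∈ μ := μ.mul_mem_left _ hm₁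
  obtain ⟨s, hs⟩ := Ideal.exists_mul_eq_mul_of_mul_self_eq_span hsq hm habar
  have hv : algebraMap O K v ≠ 0 := (v.isUnit.map (algebraMap O K)).ne_zero
  have hx₂ : algebraMap O K (↑v⁻¹ * m₁) = w 1 / algebraMap O K v := by
    rw [eq_div_iff hv, ← map_mul, mul_comm, ← mul_assoc, Units.mul_inv, one_mul]
    exact hw₁
  have hx₁ : algebraMap O K (t - s) =
      (w 3 - algebraMap O K abar * (w 1 / algebraMap O K v)) / algebraMap O K z := by
    have hs' := congrArg (algebraMap O K) hs
    have hw₃' : w 3 = algebraMap O K (t * z) := hw₃.symm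
    rw [← hx₂, hw₃', eq_div_iff hz]
    simp only [map_mul, map_sub] at hs' ⊢
    linear_combination -hs'
  refine ⟨(algebraMap O K (t - s), algebraMap O K (↑v⁻¹ * m₁)),
    ⟨⟨t - s, rfl⟩, Submodule.mem_map_of_mem hm⟩, ?_⟩
  rw [hx₁, hx₂]
  exact ellOp_xhat_eq_of_mulMap_eq_zero _ _ _ hz hv hw

end Lattice

theorem stmt9_general (O : Type*) [CommRing O] [IsDomain O]
    (K : Type*) [Field K] [Algebra O K] [IsFractionRing O K]
    (μ : Ideal O) (hμ : μ ≠ ⊥)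
    (z : O) (hsq : μ * μ = Ideal.span {z})
    (abar bbar : O) (habar : abar ∈ μ) (hbbar : IsUnit bbar)
    (k : ℕ) (u u' : Fin k → O)
    (hu : ∀ j, u j ∈ μ) (hu' : ∀ j, u' j ∈ μ)
    (hsum : ∑ j, u j * u' j = z) :
    let f : O → K := algebraMap O K
    let a : K := f abar / f z
    let b : K := f bbar / f z
    let O1 : Submodule O K := LinearMap.range (Algebra.linearMap O K)
    let μK : Submodule O K := Submodule.map (Algebra.linearMap O K) μ
    let A : Submodule O (K × K) := O1.prod μK
    let AA : Submodule O (Fin 4 → K) :=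
      Submodule.span O {w | ∃ p ∈ A, ∃ q ∈ A, w = tens p q}
    let Kerm : Submodule O (Fin 4 → K) :=
      AA ⊓ LinearMap.ker ((mulMap a b).restrictScalars O)
    let Xhat : Fin 4 → K :=
      (∑ j, tens ((0 : K), f (u j)) ((0 : K), f (u' j))) -
        (tens ((0 : K), f abar) ((1 : K), (0 : K)) +
          tens (f bbar, (0 : K)) ((1 : K), (0 : K)))
    (∀ x : A, ellOp a b (x : K × K) Xhat ∈ Kerm) ∧
    Function.Injective (fun x : A => ellOp a b (x : K × K) Xhat) ∧
    ∀ w ∈ Kerm, ∃ x ∈ A, ellOp a b x Xhat = w := by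
  intro f a b O1 μK A AA Kerm Xhat
  have hz : f z ≠ 0 := (map_ne_zero_iff _ (IsFractionRing.injective O K)).mpr
    fun h => hμ (by simpa [h] using hsq)
  have hb : f bbar ≠ 0 := (hbbar.map (algebraMap O K)).ne_zero
  have hX : Xhat = xhat (f abar) (f bbar) (f z) := sum_tens_sub_tens_eq_xhat hsum abar bbar
  have hXA : xhat (f abar) (f bbar) (f z) ∈ latticeAA K μ := xhat_mem_latticeAA habar hu hu' hsum
  rw [hX]
  exact ⟨fun x => ⟨ellOp_xhat_mem_latticeAA hsq habar hz hXA x.2, mulMap_ellOp_xhat _ _ _ hz _⟩,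
    fun x y hxy => Subtype.ext (ellOp_xhat_injective _ _ _ hz hb hxy),
    fun w hw => exists_ellOp_xhat_eq hsq habar hbbar hz hw.1 hw.2⟩

/-- If `b̄` is a unit of `O`, then `ker(m)` is a free `A`-module of rank one generated
by `X̂`: the map `A → ker(m)`, `x ↦ ℓ_x(X̂)`, is well defined and bijective onto
`ker(m) = AA ⊓ ker(mulMap)`, where `A` acts through the left tensor factor. -/
theorem stmt9 (O : Type*) [CommRing O] [IsDomain O] [IsDedekindDomain O]
    (K : Type*) [Field K] [Algebra O K] [IsFractionRing O K]
    (μ : Ideal O) (hμ : μ ≠ ⊥)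
    (z : O) (hsq : μ * μ = Ideal.span {z})
    (abar bbar : O) (habar : abar ∈ μ) (hbbar : IsUnit bbar)
    (k : ℕ) (u u' : Fin k → O)
    (hu : ∀ j, u j ∈ μ) (hu' : ∀ j, u' j ∈ μ)
    (hspan : Ideal.span (Set.range u) = μ)
    (hsum : ∑ j, u j * u' j = z) :
    let f : O → K := algebraMap O K
    let a : K := f abar / f z
    let b : K := f bbar / f z
    let O1 : Submodule O K := LinearMap.range (Algebra.linearMap O K)
    let μK : Submodule O K := Submodule.map (Algebra.linearMap O K) μ
    let A : Submodule O (K × K) := O1.prod μK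
    let AA : Submodule O (Fin 4 → K) :=
      Submodule.span O {w | ∃ p ∈ A, ∃ q ∈ A, w = tens p q}
    let Kerm : Submodule O (Fin 4 → K) :=
      AA ⊓ LinearMap.ker ((mulMap a b).restrictScalars O)
    let Xhat : Fin 4 → K :=
      (∑ j, tens ((0 : K), f (u j)) ((0 : K), f (u' j))) -
        (tens ((0 : K), f abar) ((1 : K), (0 : K)) +
          tens (f bbar, (0 : K)) ((1 : K), (0 : K)))
    (∀ x : A, ellOp a b (x : K × K) Xhat ∈ Kerm) ∧
    Function.Injective (fun x : A => ellOp a b (x : K × K) Xhat) ∧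
    ∀ w ∈ Kerm, ∃ x ∈ A, ellOp a b x Xhat = w :=
  stmt9_general O K μ hμ z hsq abar bbar habar hbbar k u u' hu hu' hsum
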